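/- arXiv:1506.07394 — 3 statements merged into one kernel-verified Lean document; each statement's English description precedes it below -/
import Mathlib

section
/- For all real numbers a, b, p, q and all natural numbers k ≤ n, one has (a p^{2k} ⊖ b q^{2k})^{n−k}_{p,q} · (a ⊖ b)^{2k}_{p,q} = (a ⊖ b)^n_{p,q} · (a p^n ⊖ b q^n)^k_{p,q}. (This is the paper's identity (a p^{2k} ⊖ b q^{2k})^{n−k}_{p,q} = (a ⊖ b)^n_{p,q} (a p^n ⊖ b q^n)^k_{p,q} / (a ⊖ b)^{2k}_{p,q}, stated in division-free form.) -/
/-- The (p,q)-shifted power: `(a ⊖ b)^n_{p,q} = ∏_{k=0}^{n-1} (a p^k − b q^k)`. -/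
def pqSubPow (p q a b : ℝ) (n : ℕ) : ℝ :=
  ∏ k ∈ Finset.range n, (a * p ^ k - b * q ^ k)

theorem pqSubPow_two_shift (a b p q : ℝ) (n k : ℕ) (hkn : k ≤ n) :
    pqSubPow p q (a * p ^ (2 * k)) (b * q ^ (2 * k)) (n - k) * pqSubPow p q a b (2 * k) =
      pqSubPow p q a b n * pqSubPow p q (a * p ^ n) (b * q ^ n) k := by
  have shift : ∀ m r : ℕ,
      pqSubPow p q a b m * pqSubPow p q (a * p ^ m) (b * q ^ m) r =
        pqSubPow p q a b (m + r) := by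
    intro m r
    unfold pqSubPow
    rw [Finset.prod_range_add]
    congr 1
    refine Finset.prod_congr rfl fun j _ => ?_
    ring
  have h1 := shift (2 * k) (n - k)
  have h2 := shift n k
  rw [mul_comm] at h1
  rw [h1, h2]
  congr 1
  omega
end

section
/- ((p,q)-Legendre multiplication formula, finite-product form) Let 0 < q < p be real numbers and let x > 0 be real. For every natural number N, one has G_{2N}(2x; p, q) · G_N(1/2; p², q²) = (p+q)^{2x−1} · G_N(x; p², q²) · G_N(x + 1/2; p², q²). (This is the exact finite-product form of Γ_{p,q}(2x) Γ_{p²,q²}(1/2) = (p+q)^{2x−1} Γ_{p²,q²}(x) Γ_{p²,q²}(x + 1/2).) -/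
/-- The partial (p,q)-Gamma product
`G_N(x; p, q) = (p−q)^{1−x} · ∏_{k=0}^{N−1} (p^{k+1} − q^{k+1})/(p^{x+k} − q^{x+k})`. -/
noncomputable def pqGammaPartial (N : ℕ) (x p q : ℝ) : ℝ :=
  (p - q) ^ (1 - x) *
    ∏ k ∈ Finset.range N,
      (p ^ ((k : ℝ) + 1) - q ^ ((k : ℝ) + 1)) / (p ^ (x + (k : ℝ)) - q ^ (x + (k : ℝ)))

open Real Finset

private lemma rpow_sq_base (p : ℝ) (hp : 0 ≤ p) (y : ℝ) : (p ^ 2 : ℝ) ^ y = p ^ (2 * y) := by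
  rw [← Real.rpow_natCast p 2, ← Real.rpow_mul hp]
  norm_num

private lemma sub_rpow_pos {p q : ℝ} (hq : 0 < q) (hqp : q < p) {a : ℝ} (ha : 0 < a) :
    0 < p ^ a - q ^ a :=
  sub_pos.2 (Real.rpow_lt_rpow hq.le hqp ha)

private lemma alg_step (P1 P2 P3 P4 a b d0 d1 : ℝ) (ha : a ≠ 0) (hd0 : d0 ≠ 0)
    (hd1 : d1 ≠ 0) (ih : P1 * P2 = P3 * P4) :
    P1 * (a / d0) * (b / d1) * (P2 * (b / a)) = P3 * (b / d0) * (P4 * (b / d1)) := by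
  calc P1 * (a / d0) * (b / d1) * (P2 * (b / a))
      = (P1 * P2) * (a / d0 * (b / d1) * (b / a)) := by ring
    _ = (P3 * P4) * (b / d0 * (b / d1)) := by
        rw [ih]; congr 1; field_simp
    _ = P3 * (b / d0) * (P4 * (b / d1)) := by ring

private lemma prod_key (p q x : ℝ) (hq : 0 < q) (hqp : q < p) (hx : 0 < x) (N : ℕ) :
    (∏ k ∈ range (2 * N),
        (p ^ ((k : ℝ) + 1) - q ^ ((k : ℝ) + 1)) /
          (p ^ (2 * x + (k : ℝ)) - q ^ (2 * x + (k : ℝ)))) *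
      (∏ k ∈ range N,
        (p ^ (2 * ((k : ℝ) + 1)) - q ^ (2 * ((k : ℝ) + 1))) /
          (p ^ (2 * (1 / 2 + (k : ℝ))) - q ^ (2 * (1 / 2 + (k : ℝ))))) =
    (∏ k ∈ range N,
        (p ^ (2 * ((k : ℝ) + 1)) - q ^ (2 * ((k : ℝ) + 1))) /
          (p ^ (2 * (x + (k : ℝ))) - q ^ (2 * (x + (k : ℝ))))) *
      (∏ k ∈ range N,
        (p ^ (2 * ((k : ℝ) + 1)) - q ^ (2 * ((k : ℝ) + 1))) /
          (p ^ (2 * (x + 1 / 2 + (k : ℝ))) - q ^ (2 * (x + 1 / 2 + (k : ℝ))))) := by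
  induction N with
  | zero => simp
  | succ n ih =>
    have h2 : 2 * (n + 1) = (2 * n) + 1 + 1 := by ring
    rw [h2, prod_range_succ, prod_range_succ, prod_range_succ, prod_range_succ, prod_range_succ]
    push_cast
    have e1 : 2 * (1 / 2 + (n : ℝ)) = 2 * (n : ℝ) + 1 := by ring
    have e2 : 2 * ((n : ℝ) + 1) = 2 * (n : ℝ) + 1 + 1 := by ring
    have e3 : 2 * (x + (n : ℝ)) = 2 * x + 2 * (n : ℝ) := by ring
    have e4 : 2 * (x + 1 / 2 + (n : ℝ)) = 2 * x + (2 * (n : ℝ) + 1) := by ring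
    rw [e1, e2, e3, e4]
    have ha : p ^ (2 * (n : ℝ) + 1) - q ^ (2 * (n : ℝ) + 1) ≠ 0 :=
      (sub_rpow_pos hq hqp (by positivity)).ne'
    have hd0 : p ^ (2 * x + 2 * (n : ℝ)) - q ^ (2 * x + 2 * (n : ℝ)) ≠ 0 :=
      (sub_rpow_pos hq hqp (by positivity)).ne'
    have hd1 : p ^ (2 * x + (2 * (n : ℝ) + 1)) - q ^ (2 * x + (2 * (n : ℝ) + 1)) ≠ 0 :=
      (sub_rpow_pos hq hqp (by positivity)).ne'
    exact alg_step _ _ _ _ _ _ _ _ ha hd0 hd1 ih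

private lemma pre_key (p q x : ℝ) (hq : 0 < q) (hqp : q < p) :
    (p - q) ^ (1 - 2 * x) * (p ^ 2 - q ^ 2) ^ (1 - 1 / 2 : ℝ) =
      (p + q) ^ (2 * x - 1) *
        ((p ^ 2 - q ^ 2) ^ (1 - x) * (p ^ 2 - q ^ 2) ^ (1 - (x + 1 / 2))) := by
  have h1 : (0:ℝ) < p - q := sub_pos.2 hqp
  have h2 : (0:ℝ) < p + q := by linarith
  have h3 : (p ^ 2 - q ^ 2 : ℝ) = (p - q) * (p + q) := by ring
  rw [h3, Real.mul_rpow h1.le h2.le, Real.mul_rpow h1.le h2.le, Real.mul_rpow h1.le h2.le]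
  simp only [Real.rpow_def_of_pos h1, Real.rpow_def_of_pos h2, ← Real.exp_add]
  rw [Real.exp_eq_exp]
  ring

/-- (p,q)-Legendre multiplication formula, finite-product form. -/
theorem pqGammaPartial_legendre (p q x : ℝ) (hq : 0 < q) (hqp : q < p)
    (hx : 0 < x) (N : ℕ) :
    pqGammaPartial (2 * N) (2 * x) p q * pqGammaPartial N (1 / 2) (p ^ 2) (q ^ 2) =
      (p + q) ^ (2 * x - 1) * pqGammaPartial N x (p ^ 2) (q ^ 2) *
        pqGammaPartial N (x + 1 / 2) (p ^ 2) (q ^ 2) := by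
  have hp : (0:ℝ) < p := lt_trans hq hqp
  unfold pqGammaPartial
  simp only [rpow_sq_base p hp.le, rpow_sq_base q hq.le]
  have combined := congrArg₂ (· * ·) (pre_key p q x hq hqp) (prod_key p q x hq hqp hx N)
  linear_combination combined
end

section
/- ((p,q)-Gauss multiplication formula, finite-product form) Let 0 < q < p be real numbers, let x > 0 be real, and let n ≥ 1 be a natural number. For every natural number N, one has G_{nN}(nx; p, q) · ∏_{k=1}^{n−1} G_N(k/n; p^n, q^n) = ([n]_{p,q})^{nx−1} · ∏_{k=0}^{n−1} G_N(x + k/n; p^n, q^n), where [n]_{p,q} = (p^n − q^n)/(p−q). (This is the exact finite-product form of Γ_{p,q}(nx) ∏_{k=1}^{n−1} Γ_{p^n,q^n}(k/n) = ([n]_{p,q})^{nx−1} ∏_{k=0}^{n−1} Γ_{p^n,q^n}(x + k/n).) -/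
private lemma rpow_sum' {a : ℝ} (ha : 0 < a) {ι : Type*} (s : Finset ι) (f : ι → ℝ) :
    a ^ (∑ i ∈ s, f i) = ∏ i ∈ s, a ^ f i := by
  induction s using Finset.cons_induction with
  | empty => simp
  | cons i s hi ih => rw [Finset.sum_cons, Finset.prod_cons, Real.rpow_add ha, ih]

private lemma sum_range_cast (m : ℕ) : ∑ k ∈ Finset.range m, (k : ℝ) = m * (m - 1) / 2 := by
  induction m with
  | zero => simp
  | succ m ih => rw [Finset.sum_range_succ, ih]; push_cast; ring

private lemma sum_aff (m : ℕ) (a b : ℝ) :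
    ∑ k ∈ Finset.range m, (a + b * (k : ℝ)) = m * a + b * (m * (m - 1) / 2) := by
  rw [Finset.sum_add_distrib, Finset.sum_const, ← Finset.mul_sum, sum_range_cast,
    Finset.card_range, nsmul_eq_mul]

private lemma prod_range_mul' {M : Type*} [CommMonoid M] (n N : ℕ) (f : ℕ → M) :
    ∏ j ∈ Finset.range (n * N), f j =
      ∏ r ∈ Finset.range n, ∏ i ∈ Finset.range N, f (n * i + r) := by
  induction N with
  | zero => simp
  | succ N ih =>
    rw [Nat.mul_succ, Finset.prod_range_add, ih]
    simp only [Finset.prod_range_succ, Finset.prod_mul_distrib]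

/-- (p,q)-Gauss multiplication formula, finite-product form. -/
theorem pqGammaPartial_gauss (p q x : ℝ) (hq : 0 < q) (hqp : q < p)
    (hx : 0 < x) (n : ℕ) (hn : 1 ≤ n) (N : ℕ) :
    pqGammaPartial (n * N) ((n : ℝ) * x) p q *
        ∏ k ∈ Finset.range (n - 1),
          pqGammaPartial N (((k : ℝ) + 1) / (n : ℝ)) (p ^ n) (q ^ n) =
      ((p ^ n - q ^ n) / (p - q)) ^ ((n : ℝ) * x - 1) *
        ∏ k ∈ Finset.range n,
          pqGammaPartial N (x + (k : ℝ) / (n : ℝ)) (p ^ n) (q ^ n) := by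
  have hp : 0 < p := hq.trans hqp
  have hn0 : (n : ℝ) ≠ 0 := Nat.cast_ne_zero.mpr (by omega)
  have hQP : q ^ n < p ^ n := pow_lt_pow_left₀ hqp hq.le (by omega)
  have hQ : (0:ℝ) < q ^ n := pow_pos hq n
  have hP : (0:ℝ) < p ^ n := pow_pos hp n
  have hpq : (0:ℝ) < p - q := sub_pos.mpr hqp
  have hPQ : (0:ℝ) < p ^ n - q ^ n := sub_pos.mpr hQP
  have hpow : ∀ a : ℝ, 0 < a → ∀ t : ℝ, ((a ^ n : ℝ)) ^ t = a ^ ((n : ℝ) * t) := by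
    intro a ha t
    rw [← Real.rpow_natCast a n, ← Real.rpow_mul ha.le]
  have hfac : ∀ s t : ℝ, (n : ℝ) * t = s →
      p ^ s - q ^ s = (p ^ n : ℝ) ^ t - (q ^ n : ℝ) ^ t := by
    intro s t h
    rw [hpow p hp, hpow q hq, h]
  have hdiffn : ∀ t : ℝ, 0 < t → 0 < (p ^ n : ℝ) ^ t - (q ^ n : ℝ) ^ t :=
    fun t ht => sub_pos.mpr (Real.rpow_lt_rpow hQ.le hQP ht)
  have hc : ((n - 1 : ℕ) : ℝ) = (n : ℝ) - 1 := by
    push_cast [Nat.cast_sub hn]; ring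
  -- unfold everything
  simp only [pqGammaPartial, Finset.prod_div_distrib, Finset.prod_mul_distrib,
    Finset.prod_const, Finset.card_range]
  set C : ℝ := ∏ i ∈ Finset.range N,
      ((p ^ n : ℝ) ^ ((i : ℝ) + 1) - (q ^ n : ℝ) ^ ((i : ℝ) + 1)) with hCdef
  set PD : ℝ := ∏ k ∈ Finset.range (n-1), ∏ i ∈ Finset.range N,
      ((p ^ n : ℝ) ^ (((k : ℝ) + 1) / (n : ℝ) + (i : ℝ)) -
        (q ^ n : ℝ) ^ (((k : ℝ) + 1) / (n : ℝ) + (i : ℝ))) with hPDdef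
  set PE : ℝ := ∏ k ∈ Finset.range n, ∏ i ∈ Finset.range N,
      ((p ^ n : ℝ) ^ (x + (k : ℝ) / (n : ℝ) + (i : ℝ)) -
        (q ^ n : ℝ) ^ (x + (k : ℝ) / (n : ℝ) + (i : ℝ))) with hPEdef
  have hPDpos : 0 < PD := by
    rw [hPDdef]
    exact Finset.prod_pos fun k _ => Finset.prod_pos fun i _ => hdiffn _ (by positivity)
  have hPEpos : 0 < PE := by
    rw [hPEdef]
    exact Finset.prod_pos fun k _ => Finset.prod_pos fun i _ => hdiffn _ (by positivity)
  have hA : ∏ j ∈ Finset.range (n * N), (p ^ ((j : ℝ) + 1) - q ^ ((j : ℝ) + 1)) = PD * C := by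
    rw [prod_range_mul',
      show Finset.range n = Finset.range ((n-1)+1) from by rw [Nat.sub_add_cancel hn],
      Finset.prod_range_succ]
    congr 1
    · rw [hPDdef]
      refine Finset.prod_congr rfl fun r hr => Finset.prod_congr rfl fun i _ => ?_
      refine hfac _ _ ?_
      push_cast
      field_simp
      ring
    · rw [hCdef]
      refine Finset.prod_congr rfl fun i _ => ?_
      refine hfac _ _ ?_
      push_cast [Nat.cast_sub hn]
      ring
  have hB : ∏ j ∈ Finset.range (n * N),
      (p ^ ((n : ℝ) * x + (j : ℝ)) - q ^ ((n : ℝ) * x + (j : ℝ))) = PE := by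
    rw [prod_range_mul', hPEdef]
    refine Finset.prod_congr rfl fun r _ => Finset.prod_congr rfl fun i _ => ?_
    refine hfac _ _ ?_
    push_cast
    field_simp
    ring
  have h1 : ∑ k ∈ Finset.range (n-1), (1 - ((k:ℝ)+1)/(n:ℝ)) = ((n:ℝ)-1)/2 := by
    rw [show (∑ k ∈ Finset.range (n-1), (1 - ((k:ℝ)+1)/(n:ℝ)))
        = ∑ k ∈ Finset.range (n-1), ((1 - 1/(n:ℝ)) + (-(1/(n:ℝ))) * (k:ℝ)) from
      Finset.sum_congr rfl fun k _ => by ring, sum_aff, hc]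
    field_simp
    ring
  have h2 : ∑ k ∈ Finset.range n, (1 - (x + (k:ℝ)/(n:ℝ))) = (n:ℝ)*(1-x) - ((n:ℝ)-1)/2 := by
    rw [show (∑ k ∈ Finset.range n, (1 - (x + (k:ℝ)/(n:ℝ))))
        = ∑ k ∈ Finset.range n, ((1 - x) + (-(1/(n:ℝ))) * (k:ℝ)) from
      Finset.sum_congr rfl fun k _ => by ring, sum_aff]
    field_simp
    ring
  have hdiv : ((p^n - q^n)/(p - q)) ^ ((n:ℝ)*x - 1)
      = (p^n - q^n) ^ ((n:ℝ)*x - 1) * (p - q) ^ (1 - (n:ℝ)*x) := by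
    rw [Real.div_rpow hPQ.le hpq.le, div_eq_mul_inv, ← Real.rpow_neg hpq.le,
      show -((n:ℝ)*x-1) = 1-(n:ℝ)*x from by ring]
  have hcomb : (p^n - q^n) ^ ((n:ℝ)*x - 1) * (p^n - q^n) ^ ((n:ℝ)*(1-x) - ((n:ℝ)-1)/2)
      = (p^n - q^n) ^ (((n:ℝ)-1)/2) := by
    rw [← Real.rpow_add hPQ]
    congr 1
    ring
  have hCn : C ^ n = C ^ (n-1) * C := by
    rw [← pow_succ, Nat.sub_add_cancel hn]
  rw [hA, hB, ← rpow_sum' hPQ, ← rpow_sum' hPQ, h1, h2, hdiv, ← hcomb, hCn]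
  field_simp
end
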